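/- Let k be a commutative ring, A a commutative k-algebra, and (E,Ψ̄), (F,Ψ̿) two left pre-HS-modules over A/k. Then: (1) for every p ∈ ℕ, every nonempty co-ideal Δ ⊆ ℕ^p and every D ∈ HS^p_k(A;Δ), there is a unique k[[s]]_Δ-linear automorphism Ψ^p_Δ(D) of Hom_A(E,F)[[s]]_Δ, congruent to the identity modulo classes of series with zero constant term, such that ν(Ψ^p_Δ(D)(h)) = Ψ̿^p_Δ(D) ∘ ν(h) ∘ Ψ̄^p_Δ(D*) for every h ∈ Hom_A(E,F)[[s]]_Δ, where ν : Hom_A(E,F)[[s]]_Δ → Hom_{k[[s]]_Δ}(E[[s]]_Δ, F[[s]]_Δ) sends h = Σ h_α s^α to the map h̃(Σ e_γ s^γ) = Σ_α (Σ_{β+γ=α} h_β(e_γ)) s^α; (2) the system Ψ = {Ψ^p_Δ} is a left pre-HS-module structure on Hom_A(E,F) over A/k, and it is a HS-module structure whenever Ψ̄ and Ψ̿ are. -/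

import Mathlib

/-!
Series are families of coefficients, and every identity is read modulo the co-ideal `Δ`
(`Set.EqOn _ _ Δ`), for which convolution is a congruence. The operator `Θ(D)` on
`Hom_A(E,F)[[s]]_Δ` is pinned down by its values on constant series,
`Θ(D)_α(x) = ∑_{β+γ=α} Ψ₂(D)_β ∘ x ∘ Ψ₁(D*)_γ` (`IsConj`), and such conjugations compose:
`Θ(D) Θ(E)` is conjugation by `Ψ₂(D) Ψ₂(E)` and `Ψ₁(E*) Ψ₁(D*)`. Hence multiplicativity,
invertibility and uniqueness of `Θ` reduce to those of `Ψ₁`, `Ψ₂` and to the group structure of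
`HS^p_k(A;Δ)`, which holds because the series form of the Leibniz rule is stable under products
and inverses. The Leibniz rule of `Ψ₂(D)` gives that of `Θ(D)`, and together with that of
`Ψ₁(D*)` and `D D* = 1` it makes `Θ(D)_α(x)` `A`-linear. For a substitution map `φ`, the
identity `Θ(D)(x) ∘ Ψ₁(D) = Ψ₂(D) ∘ x` survives `φ•` because `φ•` is multiplicative on
`A`-bilinear pairings, and it determines `Θ(φ•D)(x)` since `Ψ₁(φ•D)` is invertible.
-/

open scoped Classical

namespace HS

/-- multi-indices in `ℕ^p` -/
abbrev MIdx (p : ℕ) := Fin p → ℕ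

/-- the total weight `|α|` of a multi-index -/
def wt {p : ℕ} (α : MIdx p) : ℕ := ∑ i, α i

/-- a non-empty co-ideal of `ℕ^p` -/
def IsCoideal {p : ℕ} (Δ : Set (MIdx p)) : Prop :=
  Δ.Nonempty ∧ ∀ ⦃α : MIdx p⦄, α ∈ Δ → ∀ ⦃β : MIdx p⦄, β ≤ α → β ∈ Δ

/-- Convolution product of two power series, given by their coefficient families:
this is the multiplication of `R[[s]]_Δ` (in terms of representatives). -/
def sconv {p : ℕ} {R : Type*} [NonUnitalNonAssocSemiring R] (f g : MIdx p → R) : MIdx p → R :=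
  fun α => ∑ β ∈ Finset.Iic α, f β * g (α - β)

/-- Applying a series of linear operators to a series of module elements; for an
operator family `f`, `fapply f` is the induced `k[[s]]_Δ`-linear map `f̃ = ∑ f_β s^β`. -/
def fapply {p : ℕ} {k M N : Type*} [Semiring k] [AddCommMonoid M] [AddCommMonoid N]
    [Module k M] [Module k N] (f : MIdx p → (M →ₗ[k] N)) (m : MIdx p → M) : MIdx p → N :=
  fun α => ∑ β ∈ Finset.Iic α, f β (m (α - β))

/-- a series of scalars acting on a series of module elements:
the module structure of `M[[s]]_Δ` over `A[[s]]_Δ` (in terms of representatives). -/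
def smul' {p : ℕ} {A M : Type*} [Semiring A] [AddCommMonoid M] [Module A M]
    (a : MIdx p → A) (m : MIdx p → M) : MIdx p → M :=
  fun α => ∑ β ∈ Finset.Iic α, a β • m (α - β)

/-- the unit (delta) series `1` -/
def one' {p : ℕ} {R : Type*} [Zero R] [One R] : MIdx p → R :=
  fun α => if α = 0 then 1 else 0

/-- `D` is a `(p,Δ)`-variate Hasse–Schmidt derivation of `A` over `k`:
`D_0 = id` and the Leibniz rule `D_α(xy) = ∑_{β+γ=α} D_β(x) D_γ(y)` for `α ∈ Δ`. -/
def IsHS (k A : Type*) [CommRing k] [CommRing A] [Algebra k A] {p : ℕ}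
    (Δ : Set (MIdx p)) (D : MIdx p → Module.End k A) : Prop :=
  D 0 = 1 ∧ ∀ α ∈ Δ, ∀ x y : A,
    D α (x * y) = ∑ β ∈ Finset.Iic α, D β x * D (α - β) y

/-- A substitution map `φ : A[[s]]_Δ → A[[t]]_∇`, modelled by the family of its
coefficients `C α e = C_e(φ,α)` (the coefficient of `t^e` in `φ(s^α)`):
it is multiplicative on monomials, unital, of order `≥ 1` (so `C α e = 0` for
`|e| < |α|`), kills the classes of monomials `s^α` with `α ∉ Δ`, and is
normalized to vanish outside `∇`. -/
structure SubstMap (A : Type*) [CommRing A] (p q : ℕ)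
    (Δ : Set (MIdx p)) (nab : Set (MIdx q)) where
  C : MIdx p → MIdx q → A
  c_zero : ∀ e ∈ nab, C 0 e = if e = 0 then 1 else 0
  c_mul : ∀ α ∈ Δ, ∀ β ∈ Δ, ∀ e ∈ nab,
    C (α + β) e = ∑ u ∈ Finset.Iic e, C α u * C β (e - u)
  c_ord : ∀ α ∈ Δ, ∀ e ∈ nab, wt e < wt α → C α e = 0
  c_suppL : ∀ α : MIdx p, α ∉ Δ → ∀ e : MIdx q, C α e = 0
  c_suppR : ∀ (α : MIdx p) (e : MIdx q), e ∉ nab → C α e = 0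

variable {A' : Type*} [CommRing A'] {p' q' : ℕ} {Δ' : Set (MIdx p')} {nab' : Set (MIdx q')}

/-- the map `A[[s]]_Δ → A[[t]]_∇` induced by a substitution map -/
def SubstMap.app (φ : SubstMap A' p' q' Δ' nab') (f : MIdx p' → A') : MIdx q' → A' :=
  fun e => ∑ α ∈ Finset.Iic (fun _ => wt e : MIdx p'), φ.C α e * f α

/-- `φ • D` for a series of `k`-linear endomorphisms of `A` -/
def SubstMap.bulletEnd {k : Type*} [CommRing k] [Algebra k A']
    (φ : SubstMap A' p' q' Δ' nab') (D : MIdx p' → Module.End k A') :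
    MIdx q' → Module.End k A' :=
  fun e => ∑ α ∈ Finset.Iic (fun _ => wt e : MIdx p'), φ.C α e • D α

/-- `φ • r` for a series with coefficients in a `k`-algebra `S` over `A`
(with structural map `ι : A → S`) -/
def SubstMap.bulletS {S : Type*} [Ring S] (ι : A' → S)
    (φ : SubstMap A' p' q' Δ' nab') (r : MIdx p' → S) : MIdx q' → S :=
  fun e => ∑ α ∈ Finset.Iic (fun _ => wt e : MIdx p'), ι (φ.C α e) * r α

/-- `r • φ` for a series with coefficients in a `k`-algebra `S` over `A` -/
def SubstMap.bulletSR {S : Type*} [Ring S] (ι : A' → S)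
    (φ : SubstMap A' p' q' Δ' nab') (r : MIdx p' → S) : MIdx q' → S :=
  fun e => ∑ α ∈ Finset.Iic (fun _ => wt e : MIdx p'), r α * ι (φ.C α e)

/-- `φ • m` for a series with coefficients in an `A`-module `M` -/
def SubstMap.bulletM {M : Type*} [AddCommMonoid M] [Module A' M]
    (φ : SubstMap A' p' q' Δ' nab') (m : MIdx p' → M) : MIdx q' → M :=
  fun e => ∑ α ∈ Finset.Iic (fun _ => wt e : MIdx p'), φ.C α e • m α

/-- `φ` has constant coefficients, i.e. all the `C_e(φ,α)` come from `k` -/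
def SubstMap.HasConstCoeffs (k : Type*) [CommRing k] [Algebra k A']
    (φ : SubstMap A' p' q' Δ' nab') : Prop :=
  ∀ (α : MIdx p') (e : MIdx q'), φ.C α e ∈ Set.range (algebraMap k A')

/-- a system of maps `Ψ^p_Δ : HS^p_k(A;Δ) → U^p(End_k(M);Δ)` as in a
(pre-)HS-module structure on `M` over `A/k` -/
abbrev HSSystem (k A M : Type*) [CommRing k] [CommRing A] [Algebra k A]
    [AddCommMonoid M] [Module k M] : Type _ :=
  ∀ (p : ℕ) (Δ : Set (MIdx p)), (MIdx p → Module.End k A) → (MIdx p → Module.End k M)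

/-- `Ψ` is a left pre-HS-module structure on `M` over `A/k`:  for each `p`, each
non-empty co-ideal `Δ ⊆ ℕ^p` and each `D ∈ HS^p_k(A;Δ)`, the automorphism
`Ψ^p_Δ(D)` of `M[[s]]_Δ` (given by its family of coefficients in `End_k(M)`) has
constant coefficient the identity, depends only on the class of `D`, is
multiplicative in `D`, is invertible, satisfies the Leibniz rule
`Ψ^p_Δ(D)·a = D̃(a)·Ψ^p_Δ(D)`, and is compatible with the action of substitution
maps with constant coefficients:  `Ψ^q_∇(φ•D) = φ•Ψ^p_Δ(D)`. -/
def IsPreHSMod (k A M : Type*) [CommRing k] [CommRing A] [Algebra k A]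
    [AddCommGroup M] [Module k M] [Module A M] [IsScalarTower k A M]
    (Ψ : HSSystem k A M) : Prop :=
  ∀ (p : ℕ) (Δ : Set (MIdx p)), IsCoideal Δ →
    ∀ D : MIdx p → Module.End k A, IsHS k A Δ D →
      (Ψ p Δ D 0 = 1)
      ∧ (∀ D' : MIdx p → Module.End k A, IsHS k A Δ D' → (∀ α ∈ Δ, D α = D' α) →
          ∀ α ∈ Δ, Ψ p Δ D α = Ψ p Δ D' α)
      ∧ (∀ E : MIdx p → Module.End k A, IsHS k A Δ E →
          ∀ α ∈ Δ, Ψ p Δ (sconv D E) α = sconv (Ψ p Δ D) (Ψ p Δ E) α)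
      ∧ (∃ Θ : MIdx p → Module.End k M,
          (∀ α ∈ Δ, sconv (Ψ p Δ D) Θ α = (one' : MIdx p → Module.End k M) α)
          ∧ (∀ α ∈ Δ, sconv Θ (Ψ p Δ D) α = (one' : MIdx p → Module.End k M) α))
      ∧ (∀ (a : MIdx p → A) (m : MIdx p → M), ∀ α ∈ Δ,
          fapply (Ψ p Δ D) (smul' a m) α = smul' (fapply D a) (fapply (Ψ p Δ D) m) α)
      ∧ (∀ (q : ℕ) (nab : Set (MIdx q)), IsCoideal nab →
          ∀ φ : SubstMap A p q Δ nab, φ.HasConstCoeffs k →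
          ∀ e ∈ nab, ∀ x : M,
            Ψ q nab (φ.bulletEnd D) e x
              = ∑ α ∈ Finset.Iic (fun _ => wt e : MIdx p), φ.C α e • Ψ p Δ D α x)

/-- `Ψ` is a left HS-module structure on `M` over `A/k`: as `IsPreHSMod`, but with
compatibility with the action of arbitrary substitution maps. -/
def IsHSMod (k A M : Type*) [CommRing k] [CommRing A] [Algebra k A]
    [AddCommGroup M] [Module k M] [Module A M] [IsScalarTower k A M]
    (Ψ : HSSystem k A M) : Prop :=
  ∀ (p : ℕ) (Δ : Set (MIdx p)), IsCoideal Δ →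
    ∀ D : MIdx p → Module.End k A, IsHS k A Δ D →
      (Ψ p Δ D 0 = 1)
      ∧ (∀ D' : MIdx p → Module.End k A, IsHS k A Δ D' → (∀ α ∈ Δ, D α = D' α) →
          ∀ α ∈ Δ, Ψ p Δ D α = Ψ p Δ D' α)
      ∧ (∀ E : MIdx p → Module.End k A, IsHS k A Δ E →
          ∀ α ∈ Δ, Ψ p Δ (sconv D E) α = sconv (Ψ p Δ D) (Ψ p Δ E) α)
      ∧ (∃ Θ : MIdx p → Module.End k M,
          (∀ α ∈ Δ, sconv (Ψ p Δ D) Θ α = (one' : MIdx p → Module.End k M) α)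
          ∧ (∀ α ∈ Δ, sconv Θ (Ψ p Δ D) α = (one' : MIdx p → Module.End k M) α))
      ∧ (∀ (a : MIdx p → A) (m : MIdx p → M), ∀ α ∈ Δ,
          fapply (Ψ p Δ D) (smul' a m) α = smul' (fapply D a) (fapply (Ψ p Δ D) m) α)
      ∧ (∀ (q : ℕ) (nab : Set (MIdx q)), IsCoideal nab →
          ∀ φ : SubstMap A p q Δ nab,
          ∀ e ∈ nab, ∀ x : M,
            Ψ q nab (φ.bulletEnd D) e x
              = ∑ α ∈ Finset.Iic (fun _ => wt e : MIdx p), φ.C α e • Ψ p Δ D α x)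

/-- the natural map `ν : Hom_A(E,F)[[s]]_Δ → Hom_{k[[s]]_Δ}(E[[s]]_Δ, F[[s]]_Δ)`,
`ν(h) = h̃`, evaluated on a series -/
def happly {A E F : Type*} [CommRing A]
    [AddCommGroup E] [Module A E] [AddCommGroup F] [Module A F] {p : ℕ}
    (h : MIdx p → (E →ₗ[A] F)) (eS : MIdx p → E) : MIdx p → F :=
  fun α => ∑ β ∈ Finset.Iic α, h β (eS (α - β))


open Finset

section MultiIndex

variable {p : ℕ} {Δ : Set (MIdx p)}

theorem IsCoideal.zero_mem (hΔ : IsCoideal Δ) : (0 : MIdx p) ∈ Δ :=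
  let ⟨_, hα⟩ := hΔ.1
  hΔ.2 hα zero_le

theorem IsCoideal.tsub_mem (hΔ : IsCoideal Δ) {α : MIdx p} (hα : α ∈ Δ) (β : MIdx p) :
    α - β ∈ Δ :=
  hΔ.2 hα tsub_le_self

theorem wt_mono {α β : MIdx p} (h : α ≤ β) : wt α ≤ wt β :=
  sum_le_sum fun i _ => h i

theorem wt_tsub_lt {α β : MIdx p} (hle : β ≤ α) (hβ : β ≠ 0) : wt (α - β) < wt α := by
  obtain ⟨i, hi⟩ : ∃ i, β i ≠ 0 := by
    by_contra! h
    exact hβ (funext h)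
  have hi' := Nat.pos_of_ne_zero hi
  exact sum_lt_sum (fun j _ => tsub_le_self)
    ⟨i, mem_univ i, Nat.sub_lt (hi'.trans_le (hle i)) hi'⟩

end MultiIndex

section IicSums

variable {p : ℕ} {M : Type*} [AddCommMonoid M]

theorem sum_Iic_reflect (α : MIdx p) (f : MIdx p → MIdx p → M) :
    ∑ β ∈ Iic α, f β (α - β) = ∑ β ∈ Iic α, f (α - β) β := by
  refine sum_nbij' (α - ·) (α - ·) ?_ ?_ ?_ ?_ ?_
  all_goals intro β hβ
  all_goals rw [mem_Iic] at hβ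
  · exact mem_Iic.2 tsub_le_self
  · exact mem_Iic.2 tsub_le_self
  · exact tsub_tsub_cancel_of_le hβ
  · exact tsub_tsub_cancel_of_le hβ
  · rw [tsub_tsub_cancel_of_le hβ]

theorem sum_Iic_assoc (α : MIdx p) (f : MIdx p → MIdx p → MIdx p → M) :
    ∑ β ∈ Iic α, ∑ γ ∈ Iic β, f γ (β - γ) (α - β)
      = ∑ γ ∈ Iic α, ∑ δ ∈ Iic (α - γ), f γ δ (α - γ - δ) := by
  rw [sum_sigma', sum_sigma']
  refine sum_nbij' (fun x => ⟨x.2, x.1 - x.2⟩) (fun y => ⟨y.1 + y.2, y.1⟩) ?_ ?_ ?_ ?_ ?_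
  all_goals rintro ⟨β, γ⟩ h
  all_goals simp only [mem_sigma, mem_Iic] at h ⊢
  · exact ⟨h.2.trans h.1, tsub_le_tsub_right h.1 γ⟩
  · exact ⟨(le_tsub_iff_left h.1).1 h.2, le_self_add⟩
  · exact Sigma.ext (add_tsub_cancel_of_le h.2) HEq.rfl
  · exact Sigma.ext rfl (heq_of_eq (add_tsub_cancel_left β γ))
  · rw [tsub_tsub, add_tsub_cancel_of_le h.2]

theorem sum_Iic_swap (α : MIdx p) (f : MIdx p → MIdx p → MIdx p → M) :
    ∑ β ∈ Iic α, ∑ γ ∈ Iic (α - β), f β γ (α - β - γ)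
      = ∑ β ∈ Iic α, ∑ γ ∈ Iic (α - β), f γ β (α - β - γ) :=
  calc _ = ∑ β ∈ Iic α, ∑ γ ∈ Iic β, f γ (β - γ) (α - β) := (sum_Iic_assoc α f).symm
    _ = ∑ β ∈ Iic α, ∑ γ ∈ Iic β, f (β - γ) γ (α - β) :=
      sum_congr rfl fun β _ => sum_Iic_reflect β fun x y => f x y (α - β)
    _ = _ := sum_Iic_assoc α fun a b c => f b a c

theorem sum_Iic_interchange (α : MIdx p) (f : MIdx p → MIdx p → MIdx p → MIdx p → M) :
    ∑ β ∈ Iic α, ∑ u ∈ Iic β, ∑ v ∈ Iic (α - β), f u (β - u) v (α - β - v)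
      = ∑ β ∈ Iic α, ∑ u ∈ Iic β, ∑ v ∈ Iic (α - β), f u v (β - u) (α - β - v) :=
  calc _ = ∑ u ∈ Iic α, ∑ b ∈ Iic (α - u), ∑ v ∈ Iic (α - u - b), f u b v (α - u - b - v) :=
        sum_Iic_assoc α fun u b r => ∑ v ∈ Iic r, f u b v (r - v)
    _ = ∑ u ∈ Iic α, ∑ b ∈ Iic (α - u), ∑ v ∈ Iic (α - u - b), f u v b (α - u - b - v) :=
        sum_congr rfl fun u _ => sum_Iic_swap (α - u) fun b v r => f u b v r
    _ = _ := (sum_Iic_assoc α fun u b r => ∑ v ∈ Iic r, f u v b (r - v)).symm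

end IicSums

section Convolution

variable {p : ℕ} {M N P : Type*} [AddCommMonoid P]

def conv (B : M → N → P) (f : MIdx p → M) (g : MIdx p → N) : MIdx p → P :=
  fun α => ∑ β ∈ Iic α, B (f β) (g (α - β))

theorem eqOn_conv {Δ : Set (MIdx p)} (hΔ : IsCoideal Δ) (B : M → N → P) {f f' : MIdx p → M}
    {g g' : MIdx p → N} (hf : Set.EqOn f f' Δ) (hg : Set.EqOn g g' Δ) :
    Set.EqOn (conv B f g) (conv B f' g') Δ := fun α hα =>
  sum_congr rfl fun β hβ => by rw [hf (hΔ.2 hα (mem_Iic.1 hβ)), hg (hΔ.tsub_mem hα β)]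

theorem conv_zero (B : M → N → P) (f : MIdx p → M) (g : MIdx p → N) :
    conv B f g 0 = B (f 0) (g 0) := by
  rw [conv, sum_eq_single_of_mem 0 (mem_Iic.2 le_rfl), tsub_zero]
  exact fun β hβ hne => absurd (le_antisymm (mem_Iic.1 hβ) zero_le) hne

theorem conv_single_left [Zero M] (B : M → N → P) (hB : ∀ n, B 0 n = 0) (m : M)
    (g : MIdx p → N) : conv B (Pi.single 0 m) g = fun α => B m (g α) := by
  funext α
  rw [conv, sum_eq_single_of_mem 0 (mem_Iic.2 zero_le), Pi.single_eq_same, tsub_zero]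
  intro β _ hβ
  rw [Pi.single_eq_of_ne hβ, hB]

theorem conv_single_right [Zero N] (B : M → N → P) (hB : ∀ m, B m 0 = 0) (f : MIdx p → M)
    (n : N) : conv B f (Pi.single 0 n) = fun α => B (f α) n := by
  funext α
  rw [conv, sum_eq_single_of_mem α (mem_Iic.2 le_rfl), tsub_self, Pi.single_eq_same]
  intro β hβ hne
  rw [Pi.single_eq_of_ne (fun h => hne (le_antisymm (mem_Iic.1 hβ) (tsub_eq_zero_iff_le.1 h))),
    hB]

end Convolution

section ConvolutionInstances

variable {p : ℕ}

theorem sconv_eq_conv {R : Type*} [NonUnitalNonAssocSemiring R] (f g : MIdx p → R) :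
    sconv f g = conv (· * ·) f g := rfl

theorem fapply_eq_conv {k M N : Type*} [Semiring k] [AddCommMonoid M] [AddCommMonoid N]
    [Module k M] [Module k N] (f : MIdx p → (M →ₗ[k] N)) (m : MIdx p → M) :
    fapply f m = conv (fun f m => f m) f m := rfl

theorem happly_eq_conv {A E F : Type*} [CommRing A] [AddCommGroup E] [Module A E]
    [AddCommGroup F] [Module A F] (h : MIdx p → (E →ₗ[A] F)) (e : MIdx p → E) :
    happly h e = conv (fun h e => h e) h e := rfl

theorem one'_eq_single {R : Type*} [Zero R] [One R] : (one' : MIdx p → R) = Pi.single 0 1 := by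
  funext α
  by_cases h : α = 0 <;> simp [one', h]

end ConvolutionInstances

section CongruenceModCoideal

variable {p : ℕ} {Δ : Set (MIdx p)}

theorem eqOn_sconv {R : Type*} [NonUnitalNonAssocSemiring R] (hΔ : IsCoideal Δ)
    {f f' g g' : MIdx p → R} (hf : Set.EqOn f f' Δ) (hg : Set.EqOn g g' Δ) :
    Set.EqOn (sconv f g) (sconv f' g') Δ :=
  eqOn_conv hΔ _ hf hg

theorem eqOn_fapply {k M N : Type*} [Semiring k] [AddCommMonoid M] [AddCommMonoid N]
    [Module k M] [Module k N] (hΔ : IsCoideal Δ) {f f' : MIdx p → (M →ₗ[k] N)}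
    {m m' : MIdx p → M} (hf : Set.EqOn f f' Δ) (hm : Set.EqOn m m' Δ) :
    Set.EqOn (fapply f m) (fapply f' m') Δ :=
  eqOn_conv hΔ _ hf hm

theorem eqOn_smul' {A M : Type*} [Semiring A] [AddCommMonoid M] [Module A M]
    (hΔ : IsCoideal Δ) {a a' : MIdx p → A} {m m' : MIdx p → M} (ha : Set.EqOn a a' Δ)
    (hm : Set.EqOn m m' Δ) : Set.EqOn (smul' a m) (smul' a' m') Δ :=
  eqOn_conv hΔ _ ha hm

theorem eqOn_happly {A E F : Type*} [CommRing A] [AddCommGroup E] [Module A E] [AddCommGroup F]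
    [Module A F] (hΔ : IsCoideal Δ) {h h' : MIdx p → (E →ₗ[A] F)} {e e' : MIdx p → E}
    (hh : Set.EqOn h h' Δ) (he : Set.EqOn e e' Δ) : Set.EqOn (happly h e) (happly h' e') Δ :=
  eqOn_conv hΔ _ hh he

end CongruenceModCoideal

section SeriesRing

variable {p : ℕ} {R : Type*} [Ring R]

theorem sconv_one' (f : MIdx p → R) : sconv f one' = f := by
  rw [one'_eq_single, sconv_eq_conv, conv_single_right _ mul_zero]
  simp only [mul_one]

theorem one'_sconv (f : MIdx p → R) : sconv one' f = f := by
  rw [one'_eq_single, sconv_eq_conv, conv_single_left _ zero_mul]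
  simp only [one_mul]

theorem sconv_assoc (f g h : MIdx p → R) : sconv (sconv f g) h = sconv f (sconv g h) := by
  funext α
  simp only [sconv, sum_mul, mul_sum, mul_assoc]
  exact sum_Iic_assoc α fun a b c => f a * (g b * h c)

def sinv (f : MIdx p → R) (α : MIdx p) : R :=
  if α = 0 then 1 else -∑ β ∈ ((Iic α).erase 0).attach, f β * sinv f (α - β)
termination_by wt α
decreasing_by
  obtain ⟨hne, hle⟩ := mem_erase.1 β.2
  exact wt_tsub_lt (mem_Iic.1 hle) hne

theorem sinv_zero (f : MIdx p → R) : sinv f 0 = 1 := by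
  rw [sinv, if_pos rfl]

theorem sconv_sinv {f : MIdx p → R} (hf : f 0 = 1) : sconv f (sinv f) = one' := by
  funext α
  rw [sconv, ← add_sum_erase _ _ (mem_Iic.2 zero_le), hf, one_mul, tsub_zero]
  by_cases hα : α = 0
  · subst hα
    rw [sinv_zero, one', if_pos rfl, add_eq_left]
    refine sum_eq_zero fun β hβ => ?_
    obtain ⟨hne, hle⟩ := mem_erase.1 hβ
    exact absurd (le_antisymm (mem_Iic.1 hle) zero_le) hne
  · rw [sinv, if_neg hα, sum_attach ((Iic α).erase 0) fun β => f β * sinv f (α - β),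
      neg_add_cancel, one', if_neg hα]

theorem sinv_sconv {f : MIdx p → R} (hf : f 0 = 1) : sconv (sinv f) f = one' := by
  have hff : f = sinv (sinv f) :=
    calc f = sconv (sconv f (sinv f)) (sinv (sinv f)) := by
          rw [sconv_assoc, sconv_sinv (sinv_zero f), sconv_one']
      _ = sinv (sinv f) := by rw [sconv_sinv hf, one'_sconv]
  calc sconv (sinv f) f = sconv (sinv f) (sinv (sinv f)) := by rw [← hff]
    _ = one' := sconv_sinv (sinv_zero f)

theorem eqOn_sinv {Δ : Set (MIdx p)} (hΔ : IsCoideal Δ) {f g : MIdx p → R} (hf : f 0 = 1)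
    (h : Set.EqOn (sconv f g) one' Δ) : Set.EqOn g (sinv f) Δ := by
  have key := eqOn_sconv hΔ (Set.eqOn_refl (sinv f) Δ) h
  rwa [← sconv_assoc, sinv_sconv hf, one'_sconv, sconv_one'] at key

theorem eqOn_sinv_of_eqOn {Δ : Set (MIdx p)} (hΔ : IsCoideal Δ) {f g : MIdx p → R}
    (hf : f 0 = 1) (hg : g 0 = 1) (h : Set.EqOn f g Δ) : Set.EqOn (sinv f) (sinv g) Δ := by
  refine eqOn_sinv hΔ hg ?_
  have key := eqOn_sconv hΔ h.symm (Set.eqOn_refl (sinv f) Δ)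
  rwa [sconv_sinv hf] at key

end SeriesRing

section SeriesOfMaps

variable {p : ℕ} {k M : Type*} [CommRing k] [AddCommGroup M] [Module k M]

theorem fapply_single {N : Type*} [AddCommGroup N] [Module k N] (f : MIdx p → (M →ₗ[k] N))
    (m : M) : fapply f (Pi.single 0 m) = fun α => f α m :=
  conv_single_right _ (fun f => map_zero f) f m

theorem fapply_one' (m : MIdx p → M) : fapply (one' : MIdx p → Module.End k M) m = m := by
  rw [one'_eq_single, fapply_eq_conv, conv_single_left _ (fun _ => rfl)]
  rfl

theorem fapply_sconv (f g : MIdx p → Module.End k M) (m : MIdx p → M) :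
    fapply (sconv f g) m = fapply f (fapply g m) := by
  funext α
  simp only [fapply, sconv, LinearMap.sum_apply, map_sum]
  exact sum_Iic_assoc α fun a b c => f a (g b (m c))

theorem sconv_apply (f g : MIdx p → Module.End k M) (α : MIdx p) (m : M) :
    sconv f g α m = fapply f (fun β => g β m) α :=
  LinearMap.sum_apply _ _ _

theorem fapply_fapply_eqOn {Δ : Set (MIdx p)} (hΔ : IsCoideal Δ)
    {f g : MIdx p → Module.End k M} (h : Set.EqOn (sconv f g) one' Δ) (m : MIdx p → M) :
    Set.EqOn (fapply f (fapply g m)) m Δ := by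
  rw [← fapply_sconv]
  simpa only [fapply_one'] using eqOn_fapply hΔ h (Set.eqOn_refl m Δ)

theorem one'_apply (α : MIdx p) (m : M) :
    (one' : MIdx p → Module.End k M) α m = (Pi.single 0 m : MIdx p → M) α := by
  by_cases hα : α = 0 <;> simp [one', hα]

end SeriesOfMaps

section Leibniz

variable {p : ℕ} {k A M : Type*} [CommRing k] [CommRing A] [Algebra k A]
  [AddCommGroup M] [Module k M] [Module A M] {Δ : Set (MIdx p)}

theorem smul'_single_left (a : A) (m : MIdx p → M) : smul' (Pi.single 0 a) m = a • m :=
  conv_single_left _ (zero_smul A) a m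

/-- For `Ψ = D` this is the Leibniz rule in `IsHS`. -/
def IsLeibniz (Δ : Set (MIdx p)) (D : MIdx p → Module.End k A)
    (Ψ : MIdx p → Module.End k M) : Prop :=
  ∀ α ∈ Δ, ∀ (a : A) (m : M), Ψ α (a • m) = ∑ β ∈ Iic α, D β a • Ψ (α - β) m

theorem isLeibniz_iff (hΔ : IsCoideal Δ) {D : MIdx p → Module.End k A}
    {Ψ : MIdx p → Module.End k M} :
    IsLeibniz Δ D Ψ ↔
      ∀ a m, Set.EqOn (fapply Ψ (smul' a m)) (smul' (fapply D a) (fapply Ψ m)) Δ := by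
  constructor
  · intro h a m α hα
    calc fapply Ψ (smul' a m) α
        = ∑ β ∈ Iic α, ∑ u ∈ Iic β, ∑ c ∈ Iic (α - β),
            D u (a c) • Ψ (β - u) (m (α - β - c)) := by
          refine sum_congr rfl fun β hβ => ?_
          simp only [smul', map_sum, h β (hΔ.2 hα (mem_Iic.1 hβ))]
          exact sum_comm
      _ = ∑ β ∈ Iic α, ∑ u ∈ Iic β, ∑ v ∈ Iic (α - β),
            D u (a (β - u)) • Ψ v (m (α - β - v)) :=
          sum_Iic_interchange α fun u x v y => D u (a v) • Ψ x (m y)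
      _ = smul' (fapply D a) (fapply Ψ m) α := by
          simp only [smul', fapply, sum_smul, smul_sum]
          exact sum_congr rfl fun β _ => sum_comm
  · intro h α hα a m
    have key := h (Pi.single 0 a) (Pi.single 0 m) hα
    rwa [smul'_single_left, ← Pi.single_smul', fapply_single, fapply_single,
      fapply_single] at key

theorem isLeibniz_one' (hΔ : IsCoideal Δ) :
    IsLeibniz Δ (one' : MIdx p → Module.End k A) (one' : MIdx p → Module.End k M) :=
  (isLeibniz_iff hΔ).2 fun a m => by simp only [fapply_one']; exact Set.eqOn_refl _ _

theorem isLeibniz_sconv (hΔ : IsCoideal Δ) {D E : MIdx p → Module.End k A}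
    {Ψ Φ : MIdx p → Module.End k M} (hΨ : IsLeibniz Δ D Ψ) (hΦ : IsLeibniz Δ E Φ) :
    IsLeibniz Δ (sconv D E) (sconv Ψ Φ) := by
  rw [isLeibniz_iff hΔ] at *
  intro a m
  simp only [fapply_sconv]
  exact (eqOn_fapply hΔ (Set.eqOn_refl _ _) (hΦ a m)).trans (hΨ _ _)

theorem isLeibniz_of_sconv_eqOn_one' (hΔ : IsCoideal Δ) {D D' : MIdx p → Module.End k A}
    {Ψ Ψ' : MIdx p → Module.End k M} (h : IsLeibniz Δ D Ψ)
    (hD : Set.EqOn (sconv D D') one' Δ) (hΨ : Set.EqOn (sconv Ψ Ψ') one' Δ)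
    (hΨ' : Set.EqOn (sconv Ψ' Ψ) one' Δ) : IsLeibniz Δ D' Ψ' := by
  rw [isLeibniz_iff hΔ] at *
  intro a m
  have ha := (fapply_fapply_eqOn hΔ hD a).symm
  have hm := (fapply_fapply_eqOn hΔ hΨ m).symm
  exact (eqOn_fapply hΔ (Set.eqOn_refl Ψ' Δ) ((eqOn_smul' hΔ ha hm).trans (h _ _).symm)).trans
    (fapply_fapply_eqOn hΔ hΨ' _)

end Leibniz

section HasseSchmidt

variable {p : ℕ} {k A : Type*} [CommRing k] [CommRing A] [Algebra k A] {Δ : Set (MIdx p)}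

theorem isHS_one' (hΔ : IsCoideal Δ) : IsHS k A Δ one' :=
  ⟨if_pos rfl, isLeibniz_one' hΔ⟩

theorem isHS_sconv (hΔ : IsCoideal Δ) {D E : MIdx p → Module.End k A} (hD : IsHS k A Δ D)
    (hE : IsHS k A Δ E) : IsHS k A Δ (sconv D E) := by
  refine ⟨?_, isLeibniz_sconv hΔ hD.2 hE.2⟩
  rw [sconv_eq_conv, conv_zero, hD.1, hE.1, one_mul]

theorem isHS_sinv (hΔ : IsCoideal Δ) {D : MIdx p → Module.End k A} (hD : IsHS k A Δ D) :
    IsHS k A Δ (sinv D) := by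
  have h₁ : Set.EqOn (sconv D (sinv D)) one' Δ := fun α _ => congrFun (sconv_sinv hD.1) α
  have h₂ : Set.EqOn (sconv (sinv D) D) one' Δ := fun α _ => congrFun (sinv_sconv hD.1) α
  exact ⟨sinv_zero D, isLeibniz_of_sconv_eqOn_one' hΔ hD.2 h₁ h₁ h₂⟩

end HasseSchmidt

section Substitution

variable {A : Type*} [CommRing A] {p q : ℕ} {Δ : Set (MIdx p)} {nab : Set (MIdx q)}
  (φ : SubstMap A p q Δ nab)

theorem SubstMap.C_eq_zero_of_not_le {u : MIdx q} (hu : u ∈ nab) {β : MIdx p}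
    (hβ : ¬β ≤ fun _ => wt u) : φ.C β u = 0 := by
  by_cases hβΔ : β ∈ Δ
  · refine φ.c_ord β hβΔ u hu ?_
    obtain ⟨i, hi⟩ : ∃ i, wt u < β i := by simpa [Pi.le_def] using hβ
    exact hi.trans_le (Finset.single_le_sum (fun j _ => Nat.zero_le (β j)) (mem_univ i))
  · exact φ.c_suppL β hβΔ u

theorem SubstMap.C_add (hΔ : IsCoideal Δ) {e : MIdx q} (he : e ∈ nab) (β γ : MIdx p) :
    φ.C (β + γ) e = ∑ u ∈ Iic e, φ.C β u * φ.C γ (e - u) := by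
  by_cases hβ : β ∈ Δ
  · by_cases hγ : γ ∈ Δ
    · exact φ.c_mul β hβ γ hγ e he
    · rw [φ.c_suppL (β + γ) (fun h => hγ (hΔ.2 h le_add_self)) e]
      exact (sum_eq_zero fun u _ => by rw [φ.c_suppL γ hγ, mul_zero]).symm
  · rw [φ.c_suppL (β + γ) (fun h => hβ (hΔ.2 h le_self_add)) e]
    exact (sum_eq_zero fun u _ => by rw [φ.c_suppL β hβ, zero_mul]).symm

variable {M N P : Type*} [AddCommMonoid M] [Module A M] [AddCommMonoid N] [Module A N]
  [AddCommMonoid P] [Module A P]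

theorem SubstMap.bulletM_congr {f g : MIdx p → M} (h : Set.EqOn f g Δ) :
    φ.bulletM f = φ.bulletM g := by
  funext e
  refine sum_congr rfl fun α _ => ?_
  by_cases hα : α ∈ Δ
  · rw [h hα]
  · rw [φ.c_suppL α hα, zero_smul, zero_smul]

theorem SubstMap.bulletM_eq_sum {u : MIdx q} (hu : u ∈ nab) {V : MIdx p}
    (hV : (fun _ => wt u) ≤ V) (f : MIdx p → M) :
    φ.bulletM f u = ∑ β ∈ Iic V, φ.C β u • f β :=
  sum_subset (Iic_subset_Iic.2 hV) fun β _ hβ => by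
    rw [φ.C_eq_zero_of_not_le hu fun h => hβ (mem_Iic.2 h), zero_smul]

theorem SubstMap.bulletM_zero (hnab : IsCoideal nab) (f : MIdx p → M) :
    φ.bulletM f 0 = f 0 := by
  have h0 : (fun _ => wt (0 : MIdx q) : MIdx p) = 0 := funext fun _ => by simp [wt]
  rw [SubstMap.bulletM, h0, sum_eq_single_of_mem 0 (mem_Iic.2 le_rfl), φ.c_zero 0 hnab.zero_mem,
    if_pos rfl, one_smul]
  exact fun β hβ hne => absurd (le_antisymm (mem_Iic.1 hβ) zero_le) hne

/-- Both sides equal `∑_{β,γ} C_e(φ,β+γ) B(f_β, g_γ)`, by `C_e(φ,β+γ) = ∑_{u+v=e} C_u(φ,β) C_v(φ,γ)`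
on the right. -/
theorem SubstMap.bulletM_conv (hΔ : IsCoideal Δ) (hnab : IsCoideal nab)
    (B : M →ₗ[A] N →ₗ[A] P) (f : MIdx p → M) (g : MIdx p → N) {e : MIdx q} (he : e ∈ nab) :
    φ.bulletM (conv (fun m n => B m n) f g) e
      = conv (fun m n => B m n) (φ.bulletM f) (φ.bulletM g) e := by
  set W : MIdx p := fun _ => wt e
  trans ∑ β ∈ Iic W, ∑ γ ∈ Iic W, φ.C (β + γ) e • B (f β) (g γ)
  · calc φ.bulletM (conv (fun m n => B m n) f g) e
        = ∑ α ∈ Iic W, ∑ β ∈ Iic α, φ.C (β + (α - β)) e • B (f β) (g (α - β)) := by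
          refine sum_congr rfl fun α _ => ?_
          rw [conv, smul_sum]
          exact sum_congr rfl fun β hβ => by rw [add_tsub_cancel_of_le (mem_Iic.1 hβ)]
      _ = ∑ β ∈ Iic W, ∑ γ ∈ Iic (W - β), φ.C (β + γ) e • B (f β) (g γ) :=
          sum_Iic_assoc W fun b c _ => φ.C (b + c) e • B (f b) (g c)
      _ = _ := sum_congr rfl fun β hβ => sum_subset (Iic_subset_Iic.2 tsub_le_self)
          fun γ _ hγ => by
            rw [φ.C_eq_zero_of_not_le he fun h => hγ (mem_Iic.2 (le_tsub_of_add_le_left h)),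
              zero_smul]
  · symm
    calc conv (fun m n => B m n) (φ.bulletM f) (φ.bulletM g) e
        = ∑ u ∈ Iic e, ∑ β ∈ Iic W, ∑ γ ∈ Iic W,
            (φ.C β u * φ.C γ (e - u)) • B (f β) (g γ) := by
          refine sum_congr rfl fun u hu => ?_
          have hue := mem_Iic.1 hu
          rw [φ.bulletM_eq_sum (hnab.2 he hue) (fun _ => wt_mono hue) f,
            φ.bulletM_eq_sum (hnab.tsub_mem he u) (fun _ => wt_mono tsub_le_self) g]
          simp only [map_sum, LinearMap.sum_apply, map_smul, LinearMap.smul_apply, smul_sum,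
            smul_smul]
          rw [sum_comm]
          exact sum_congr rfl fun _ _ => sum_congr rfl fun _ _ => by rw [mul_comm]
      _ = ∑ β ∈ Iic W, ∑ γ ∈ Iic W,
            (∑ u ∈ Iic e, φ.C β u * φ.C γ (e - u)) • B (f β) (g γ) := by
          rw [sum_comm]
          refine sum_congr rfl fun β _ => ?_
          rw [sum_comm]
          simp only [sum_smul]
      _ = _ := by simp only [← φ.C_add hΔ he]

theorem SubstMap.bulletEnd_apply {k : Type*} [CommRing k] [Algebra k A]
    (D : MIdx p → Module.End k A) (e : MIdx q) (x : A) :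
    φ.bulletEnd D e x = φ.bulletM (fun α => D α x) e :=
  LinearMap.sum_apply _ _ _

theorem isHS_bulletEnd {k : Type*} [CommRing k] [Algebra k A] (hΔ : IsCoideal Δ)
    (hnab : IsCoideal nab) {D : MIdx p → Module.End k A} (hD : IsHS k A Δ D) :
    IsHS k A nab (φ.bulletEnd D) := by
  refine ⟨LinearMap.ext fun x => ?_, fun e he x y => ?_⟩
  · rw [φ.bulletEnd_apply, φ.bulletM_zero hnab, hD.1]
  · have hL : Set.EqOn (fun α => D α (x * y)) (sconv (fun α => D α x) (fun α => D α y)) Δ :=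
      fun α hα => hD.2 α hα x y
    have key := φ.bulletM_conv hΔ hnab (LinearMap.mul A A) (fun α => D α x) (fun α => D α y) he
    simp only [LinearMap.mul_apply', ← sconv_eq_conv] at key
    rw [φ.bulletEnd_apply, φ.bulletM_congr hL, key]
    simp only [sconv, φ.bulletEnd_apply]

end Substitution

section PreHS

variable {p : ℕ} {k A M : Type*} [CommRing k] [CommRing A] [Algebra k A] [AddCommGroup M]
  [Module k M] [Module A M] [IsScalarTower k A M] {Ψ : HSSystem k A M} {Δ : Set (MIdx p)}

theorem IsPreHSMod.isLeibniz (hΨ : IsPreHSMod k A M Ψ) (hΔ : IsCoideal Δ)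
    {D : MIdx p → Module.End k A} (hD : IsHS k A Δ D) : IsLeibniz Δ D (Ψ p Δ D) :=
  (isLeibniz_iff hΔ).2 (hΨ p Δ hΔ D hD).2.2.2.2.1

theorem IsPreHSMod.map_one' (hΨ : IsPreHSMod k A M Ψ) (hΔ : IsCoideal Δ) :
    Set.EqOn (Ψ p Δ one') one' Δ := by
  -- `Ψ(1)` is an idempotent unit
  set P := Ψ p Δ one'
  obtain ⟨-, -, hmul, ⟨Θ, -, hΘ⟩, -⟩ := hΨ p Δ hΔ one' (isHS_one' hΔ)
  have hPP : Set.EqOn P (sconv P P) Δ := fun α hα => by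
    simpa only [one'_sconv] using hmul one' (isHS_one' hΔ) α hα
  have h := eqOn_sconv hΔ (Set.eqOn_refl Θ Δ) hPP
  rw [← sconv_assoc] at h
  have h' := eqOn_sconv hΔ hΘ (Set.eqOn_refl P Δ)
  rw [one'_sconv] at h'
  exact h'.symm.trans (h.symm.trans hΘ)

theorem IsPreHSMod.sconv_eqOn_one' (hΨ : IsPreHSMod k A M Ψ) (hΔ : IsCoideal Δ)
    {D Ds : MIdx p → Module.End k A} (hD : IsHS k A Δ D) (hDs : IsHS k A Δ Ds)
    (h : Set.EqOn (sconv D Ds) one' Δ) : Set.EqOn (sconv (Ψ p Δ D) (Ψ p Δ Ds)) one' Δ := by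
  have hmul : Set.EqOn (Ψ p Δ (sconv D Ds)) (sconv (Ψ p Δ D) (Ψ p Δ Ds)) Δ :=
    (hΨ p Δ hΔ D hD).2.2.1 Ds hDs
  have hcls : Set.EqOn (Ψ p Δ (sconv D Ds)) (Ψ p Δ one') Δ :=
    (hΨ p Δ hΔ _ (isHS_sconv hΔ hD hDs)).2.1 one' (isHS_one' hΔ) h
  exact hmul.symm.trans (hcls.trans (hΨ.map_one' hΔ))

end PreHS

section HomSeries

variable {p : ℕ} {k A E F : Type*} [CommRing k] [CommRing A]
  [AddCommGroup E] [Module k E] [Module A E] [AddCommGroup F] [Module k F] [Module A F]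
  {Δ : Set (MIdx p)}

theorem happly_single_left (x : E →ₗ[A] F) (e : MIdx p → E) :
    happly (Pi.single 0 x) e = fun α => x (e α) :=
  conv_single_left _ (fun _ => rfl) x e

theorem happly_single_right (h : MIdx p → (E →ₗ[A] F)) (z : E) :
    happly h (Pi.single 0 z) = fun α => h α z :=
  conv_single_right _ (fun h => map_zero h) h z

theorem eqOn_fapply_of_happly_eqOn (hΔ : IsCoideal Δ) {P : MIdx p → Module.End k F}
    {Q Qs : MIdx p → Module.End k E} (hQ : Set.EqOn (sconv Q Qs) one' Δ)
    {T : MIdx p → (E →ₗ[A] F)} {x : E →ₗ[A] F}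
    (hT : ∀ z, Set.EqOn (happly T (fun γ => Q γ z)) (fun α => P α (x z)) Δ) (z : E) :
    Set.EqOn (fun α => T α z) (fapply P (fun γ => x (Qs γ z))) Δ := by
  intro α hα
  calc T α z = happly T (fun γ => sconv Q Qs γ z) α := by
        rw [← eqOn_happly hΔ (Set.eqOn_refl T Δ) (fun γ hγ => by rw [hQ hγ, one'_apply]) hα,
          happly_single_right]
    _ = ∑ σ ∈ Iic α, happly T (fun γ => Q γ (Qs (α - σ) z)) σ := by
        simp only [happly, sconv_apply, fapply, map_sum]
        exact (sum_Iic_assoc α fun a b c => T a (Q b (Qs c z))).symm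
    _ = fapply P (fun γ => x (Qs γ z)) α :=
        sum_congr rfl fun σ hσ => hT _ (hΔ.2 hα (mem_Iic.1 hσ))

theorem fapply_apply_smul [Algebra k A] (hΔ : IsCoideal Δ) {D Ds : MIdx p → Module.End k A}
    {P : MIdx p → Module.End k F} {Q : MIdx p → Module.End k E} (hP : IsLeibniz Δ D P)
    (hQ : IsLeibniz Δ Ds Q) (hD : Set.EqOn (sconv D Ds) one' Δ) {α : MIdx p} (hα : α ∈ Δ)
    (x : E →ₗ[A] F) (a : A) (z : E) :
    fapply P (fun γ => x (Q γ (a • z))) α = a • fapply P (fun γ => x (Q γ z)) α := by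
  have h₁ : Set.EqOn (fun γ => x (Q γ (a • z))) (smul' (fun u => Ds u a) fun γ => x (Q γ z))
      Δ := fun γ hγ => by
    simp only [hQ γ hγ, map_sum, map_smul]
    rfl
  have h₂ : Set.EqOn (fapply D fun u => Ds u a) (Pi.single 0 a) Δ := fun c hc => by
    rw [← sconv_apply, hD hc, one'_apply]
  have key := ((eqOn_fapply hΔ (Set.eqOn_refl P Δ) h₁).trans ((isLeibniz_iff hΔ).1 hP _ _)).trans
    (eqOn_smul' hΔ h₂ (Set.eqOn_refl _ Δ)) hα
  rwa [smul'_single_left] at key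

end HomSeries

section Conjugation

variable {p : ℕ} {k A E F : Type*} [CommRing k] [CommRing A] [Algebra k A]
  [AddCommGroup E] [Module k E] [Module A E]
  [AddCommGroup F] [Module k F] [Module A F] [IsScalarTower k A F] {Δ : Set (MIdx p)}

/-- `Θ` acts on `Hom_A(E,F)[[s]]_Δ` as `h ↦ P ∘ h ∘ Q`; it suffices to test this on
constant series `x` and `z`, see `isConj_iff`. -/
def IsConj (Δ : Set (MIdx p)) (P : MIdx p → Module.End k F) (Q : MIdx p → Module.End k E)
    (Θ : MIdx p → Module.End k (E →ₗ[A] F)) : Prop :=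
  ∀ (x : E →ₗ[A] F) (z : E), Set.EqOn (fun α => Θ α x z) (fapply P (fun γ => x (Q γ z))) Δ

theorem isConj_iff (hΔ : IsCoideal Δ) {P : MIdx p → Module.End k F}
    {Q : MIdx p → Module.End k E} {Θ : MIdx p → Module.End k (E →ₗ[A] F)} :
    IsConj Δ P Q Θ ↔ ∀ (hS : MIdx p → (E →ₗ[A] F)) (eS : MIdx p → E),
      Set.EqOn (happly (fapply Θ hS) eS) (fapply P (happly hS (fapply Q eS))) Δ := by
  constructor
  · intro h hS eS α hα
    calc happly (fapply Θ hS) eS α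
        = ∑ γ ∈ Iic α, ∑ δ ∈ Iic (α - γ), Θ γ (hS δ) (eS (α - γ - δ)) := by
          simp only [happly, fapply, LinearMap.sum_apply]
          exact sum_Iic_assoc α fun a b c => Θ a (hS b) (eS c)
      _ = ∑ γ ∈ Iic α, ∑ u ∈ Iic γ, ∑ δ ∈ Iic (α - γ),
            P u (hS δ (Q (γ - u) (eS (α - γ - δ)))) := by
          refine sum_congr rfl fun γ hγ => ?_
          rw [sum_comm]
          refine sum_congr rfl fun δ _ => h (hS δ) _ (hΔ.2 hα (mem_Iic.1 hγ))
      _ = ∑ γ ∈ Iic α, ∑ u ∈ Iic γ, ∑ δ ∈ Iic (α - γ),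
            P u (hS (γ - u) (Q δ (eS (α - γ - δ)))) :=
          sum_Iic_interchange α fun a c b d => P a (hS b (Q c (eS d)))
      _ = fapply P (happly hS (fapply Q eS)) α := by
          simp only [fapply, happly, map_sum]
          exact sum_Iic_assoc α fun a b r => ∑ δ ∈ Iic r, P a (hS b (Q δ (eS (r - δ))))
  · intro h x z α hα
    have key := h (Pi.single 0 x) (Pi.single 0 z) hα
    rwa [happly_single_right, fapply_single, fapply_single, happly_single_left] at key

theorem IsConj.apply_eq {P : MIdx p → Module.End k F} {Q : MIdx p → Module.End k E}
    {Θ : MIdx p → Module.End k (E →ₗ[A] F)} (h : IsConj Δ P Q Θ) {α : MIdx p} (hα : α ∈ Δ)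
    (x : E →ₗ[A] F) (z : E) : Θ α x z = ∑ β ∈ Iic α, P β (x (Q (α - β) z)) :=
  h x z hα

theorem IsConj.comp (hΔ : IsCoideal Δ) {P P' : MIdx p → Module.End k F}
    {Q Q' : MIdx p → Module.End k E} {Θ Θ' : MIdx p → Module.End k (E →ₗ[A] F)}
    (h : IsConj Δ P Q Θ) (h' : IsConj Δ P' Q' Θ') :
    IsConj Δ (sconv P P') (sconv Q' Q) (sconv Θ Θ') := by
  intro x z α hα
  calc sconv Θ Θ' α x z
      = ∑ β ∈ Iic α, ∑ u ∈ Iic β, ∑ v ∈ Iic (α - β),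
          P u (P' v (x (Q' (α - β - v) (Q (β - u) z)))) := by
        simp only [sconv, LinearMap.sum_apply, Module.End.mul_apply]
        refine sum_congr rfl fun β hβ => ?_
        rw [h.apply_eq (hΔ.2 hα (mem_Iic.1 hβ))]
        refine sum_congr rfl fun u _ => ?_
        rw [h'.apply_eq (hΔ.tsub_mem hα β), map_sum]
    _ = ∑ β ∈ Iic α, ∑ u ∈ Iic β, ∑ v ∈ Iic (α - β),
          P u (P' (β - u) (x (Q' (α - β - v) (Q v z)))) :=
        sum_Iic_interchange α fun a b c d => P a (P' c (x (Q' d (Q b z))))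
    _ = fapply (sconv P P') (fun γ => x (sconv Q' Q γ z)) α := by
        simp only [fapply, sconv, LinearMap.sum_apply, Module.End.mul_apply, map_sum]
        exact sum_congr rfl fun β _ => (sum_congr rfl fun u _ => sum_Iic_reflect (α - β)
          fun v w => P u (P' (β - u) (x (Q' w (Q v z))))).trans sum_comm

theorem IsConj.congr (hΔ : IsCoideal Δ) {P P' : MIdx p → Module.End k F}
    {Q Q' : MIdx p → Module.End k E} {Θ : MIdx p → Module.End k (E →ₗ[A] F)}
    (h : IsConj Δ P Q Θ) (hP : Set.EqOn P P' Δ) (hQ : Set.EqOn Q Q' Δ) : IsConj Δ P' Q' Θ :=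
  fun x z => (h x z).trans (eqOn_fapply hΔ hP fun γ hγ => by simp only [hQ hγ])

theorem IsConj.eqOn {P : MIdx p → Module.End k F} {Q : MIdx p → Module.End k E}
    {Θ Θ' : MIdx p → Module.End k (E →ₗ[A] F)} (h : IsConj Δ P Q Θ) (h' : IsConj Δ P Q Θ') :
    Set.EqOn Θ Θ' Δ := fun _ hα =>
  LinearMap.ext fun x => LinearMap.ext fun z => (h x z hα).trans (h' x z hα).symm

theorem isConj_one' : IsConj (k := k) Δ one' one' (one' : MIdx p → Module.End k (E →ₗ[A] F)) :=
  fun x z α _ => by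
    by_cases hα : α = 0 <;> simp [one', hα, fapply_one']

theorem IsConj.zero_eq_one (hΔ : IsCoideal Δ) {P : MIdx p → Module.End k F}
    {Q : MIdx p → Module.End k E} {Θ : MIdx p → Module.End k (E →ₗ[A] F)}
    (h : IsConj Δ P Q Θ) (hP : P 0 = 1) (hQ : Q 0 = 1) : Θ 0 = 1 :=
  LinearMap.ext fun x => LinearMap.ext fun z => (h x z hΔ.zero_mem).trans <| by
    rw [fapply_eq_conv, conv_zero, hP, hQ]
    rfl

theorem IsConj.sconv_eqOn_one' (hΔ : IsCoideal Δ) {P P' : MIdx p → Module.End k F}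
    {Q Q' : MIdx p → Module.End k E} {Θ Θ' : MIdx p → Module.End k (E →ₗ[A] F)}
    (h : IsConj Δ P Q Θ) (h' : IsConj Δ P' Q' Θ') (hP : Set.EqOn (sconv P P') one' Δ)
    (hQ : Set.EqOn (sconv Q' Q) one' Δ) : Set.EqOn (sconv Θ Θ') one' Δ :=
  ((h.comp hΔ h').congr hΔ hP hQ).eqOn isConj_one'

theorem IsConj.happly_eqOn (hΔ : IsCoideal Δ) {P : MIdx p → Module.End k F}
    {Q Qs : MIdx p → Module.End k E} {Θ : MIdx p → Module.End k (E →ₗ[A] F)}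
    (h : IsConj Δ P Qs Θ) (hQ : Set.EqOn (sconv Qs Q) one' Δ) (x : E →ₗ[A] F) (z : E) :
    Set.EqOn (happly (fun α => Θ α x) (fun γ => Q γ z)) (fun α => P α (x z)) Δ := by
  intro α hα
  calc happly (fun α => Θ α x) (fun γ => Q γ z) α
      = ∑ u ∈ Iic α, ∑ b ∈ Iic (α - u), P u (x (Qs b (Q (α - u - b) z))) := by
        rw [happly, sum_congr rfl fun a ha => h.apply_eq (hΔ.2 hα (mem_Iic.1 ha)) x _]
        exact sum_Iic_assoc α fun u b c => P u (x (Qs b (Q c z)))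
    _ = fapply P (fun γ => x (sconv Qs Q γ z)) α := by
        simp only [fapply, sconv_apply, map_sum]
    _ = fapply P (Pi.single 0 (x z)) α := eqOn_fapply hΔ (Set.eqOn_refl P Δ) (fun γ hγ => by
        rw [hQ hγ, one'_apply, Pi.apply_single (fun _ => x) (fun _ => map_zero x)]) hα
    _ = P α (x z) := by rw [fapply_single]

theorem IsConj.isLeibniz (hΔ : IsCoideal Δ) {D : MIdx p → Module.End k A}
    {P : MIdx p → Module.End k F} {Q : MIdx p → Module.End k E}
    {Θ : MIdx p → Module.End k (E →ₗ[A] F)} (hP : IsLeibniz Δ D P) (h : IsConj Δ P Q Θ) :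
    IsLeibniz Δ D Θ := by
  intro α hα a y
  ext z
  calc Θ α (a • y) z = ∑ v ∈ Iic α, P v (a • y (Q (α - v) z)) := h.apply_eq hα _ _
    _ = ∑ v ∈ Iic α, ∑ u ∈ Iic v, D u a • P (v - u) (y (Q (α - v) z)) :=
        sum_congr rfl fun v hv => hP v (hΔ.2 hα (mem_Iic.1 hv)) a _
    _ = ∑ u ∈ Iic α, ∑ w ∈ Iic (α - u), D u a • P w (y (Q (α - u - w) z)) :=
        sum_Iic_assoc α fun u w c => D u a • P w (y (Q c z))
    _ = ∑ u ∈ Iic α, D u a • Θ (α - u) y z :=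
        sum_congr rfl fun u _ => by rw [h.apply_eq (hΔ.tsub_mem hα u), smul_sum]
    _ = _ := by simp only [LinearMap.sum_apply, LinearMap.smul_apply]

theorem exists_isConj (hΔ : IsCoideal Δ) {D Ds : MIdx p → Module.End k A}
    {P : MIdx p → Module.End k F} {Q : MIdx p → Module.End k E} (hP : IsLeibniz Δ D P)
    (hQ : IsLeibniz Δ Ds Q) (hD : Set.EqOn (sconv D Ds) one' Δ) :
    ∃ Θ : MIdx p → Module.End k (E →ₗ[A] F), IsConj Δ P Q Θ := by
  refine ⟨fun α => if hα : α ∈ Δ then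
      { toFun := fun x =>
          { toFun := fun z => fapply P (fun γ => x (Q γ z)) α
            map_add' := fun z z' => by simp only [map_add, fapply, sum_add_distrib]
            map_smul' := fapply_apply_smul hΔ hP hQ hD hα x }
        map_add' := fun x x' => LinearMap.ext fun z => by
          simp only [fapply, LinearMap.add_apply, map_add, sum_add_distrib]
          rfl
        map_smul' := fun c x => LinearMap.ext fun z => by
          simp only [LinearMap.coe_mk, AddHom.coe_mk, LinearMap.smul_apply, RingHom.id_apply,
            fapply, map_smul, smul_sum] }
    else 0, fun x z α hα => by simp only [dif_pos hα]; rfl⟩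

/-- The system `Θ` on `Hom_A(E,F)` is given by `ν(Θ(D) h) = Ψ₂(D) ∘ ν(h) ∘ Ψ₁(D*)`. -/
def IsConjSystem (Ψ₁ : HSSystem k A E) (Ψ₂ : HSSystem k A F)
    (Θ : HSSystem k A (E →ₗ[A] F)) : Prop :=
  ∀ (p : ℕ) (Δ : Set (MIdx p)), IsCoideal Δ → ∀ D Ds : MIdx p → Module.End k A,
    IsHS k A Δ D → IsHS k A Δ Ds → Set.EqOn (sconv D Ds) one' Δ →
    Set.EqOn (sconv Ds D) one' Δ → ∀ (hS : MIdx p → (E →ₗ[A] F)) (eS : MIdx p → E),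
      Set.EqOn (happly (fapply (Θ p Δ D) hS) eS)
        (fapply (Ψ₂ p Δ D) (happly hS (fapply (Ψ₁ p Δ Ds) eS))) Δ

theorem IsConjSystem.isConj {Ψ₁ : HSSystem k A E} {Ψ₂ : HSSystem k A F}
    {Θ : HSSystem k A (E →ₗ[A] F)} (hΘ : IsConjSystem Ψ₁ Ψ₂ Θ) {p : ℕ} {Δ : Set (MIdx p)}
    (hΔ : IsCoideal Δ) {D : MIdx p → Module.End k A} (hD : IsHS k A Δ D) :
    IsConj Δ (Ψ₂ p Δ D) (Ψ₁ p Δ (sinv D)) (Θ p Δ D) :=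
  (isConj_iff hΔ).2 <| hΘ p Δ hΔ D (sinv D) hD (isHS_sinv hΔ hD)
    (fun α _ => congrFun (sconv_sinv hD.1) α) (fun α _ => congrFun (sinv_sconv hD.1) α)

theorem IsConjSystem.isLeibniz {Ψ₁ : HSSystem k A E} {Ψ₂ : HSSystem k A F}
    {Θ : HSSystem k A (E →ₗ[A] F)} {p : ℕ} {Δ : Set (MIdx p)} {D : MIdx p → Module.End k A}
    (hΨ₂ : IsPreHSMod k A F Ψ₂) (hΘ : IsConjSystem Ψ₁ Ψ₂ Θ)
    (hΔ : IsCoideal Δ) (hD : IsHS k A Δ D) : IsLeibniz Δ D (Θ p Δ D) :=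
  (hΘ.isConj hΔ hD).isLeibniz hΔ (hΨ₂.isLeibniz hΔ hD)

end Conjugation

section HomSystem

variable {k A E F : Type*} [CommRing k] [CommRing A] [Algebra k A]
  [AddCommGroup E] [Module k E] [Module A E] [IsScalarTower k A E]
  [AddCommGroup F] [Module k F] [Module A F] [IsScalarTower k A F]
  {Ψ₁ : HSSystem k A E} {Ψ₂ : HSSystem k A F} {Θ : HSSystem k A (E →ₗ[A] F)}
  {p : ℕ} {Δ : Set (MIdx p)} {D : MIdx p → Module.End k A}

theorem IsConjSystem.zero_eq_one (hΨ₁ : IsPreHSMod k A E Ψ₁) (hΨ₂ : IsPreHSMod k A F Ψ₂)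
    (hΘ : IsConjSystem Ψ₁ Ψ₂ Θ) (hΔ : IsCoideal Δ) (hD : IsHS k A Δ D) : Θ p Δ D 0 = 1 :=
  (hΘ.isConj hΔ hD).zero_eq_one hΔ (hΨ₂ p Δ hΔ D hD).1 (hΨ₁ p Δ hΔ _ (isHS_sinv hΔ hD)).1

theorem IsConjSystem.eqOn_of_eqOn (hΨ₁ : IsPreHSMod k A E Ψ₁) (hΨ₂ : IsPreHSMod k A F Ψ₂)
    (hΘ : IsConjSystem Ψ₁ Ψ₂ Θ) (hΔ : IsCoideal Δ) (hD : IsHS k A Δ D)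
    {D' : MIdx p → Module.End k A} (hD' : IsHS k A Δ D') (h : Set.EqOn D D' Δ) :
    Set.EqOn (Θ p Δ D) (Θ p Δ D') Δ := by
  have hQ : Set.EqOn (Ψ₁ p Δ (sinv D)) (Ψ₁ p Δ (sinv D')) Δ :=
    (hΨ₁ p Δ hΔ _ (isHS_sinv hΔ hD)).2.1 _ (isHS_sinv hΔ hD')
      (eqOn_sinv_of_eqOn hΔ hD.1 hD'.1 h)
  exact ((hΘ.isConj hΔ hD).congr hΔ ((hΨ₂ p Δ hΔ D hD).2.1 D' hD' h) hQ).eqOn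
    (hΘ.isConj hΔ hD')

theorem IsConjSystem.map_sconv (hΨ₁ : IsPreHSMod k A E Ψ₁) (hΨ₂ : IsPreHSMod k A F Ψ₂)
    (hΘ : IsConjSystem Ψ₁ Ψ₂ Θ) (hΔ : IsCoideal Δ) (hD : IsHS k A Δ D)
    {D' : MIdx p → Module.End k A} (hD' : IsHS k A Δ D') :
    Set.EqOn (Θ p Δ (sconv D D')) (sconv (Θ p Δ D) (Θ p Δ D')) Δ := by
  have hDD' := isHS_sconv hΔ hD hD'
  have hs := isHS_sconv hΔ (isHS_sinv hΔ hD') (isHS_sinv hΔ hD)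
  have hinv : Set.EqOn (sconv (sinv D') (sinv D)) (sinv (sconv D D')) Δ := by
    refine eqOn_sinv hΔ hDD'.1 fun α _ => ?_
    rw [sconv_assoc, ← sconv_assoc D', sconv_sinv hD'.1, one'_sconv, sconv_sinv hD.1]
  have hP : Set.EqOn (sconv (Ψ₂ p Δ D) (Ψ₂ p Δ D')) (Ψ₂ p Δ (sconv D D')) Δ :=
    Set.EqOn.symm ((hΨ₂ p Δ hΔ D hD).2.2.1 D' hD')
  have hQ : Set.EqOn (sconv (Ψ₁ p Δ (sinv D')) (Ψ₁ p Δ (sinv D))) (Ψ₁ p Δ (sinv (sconv D D')))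
      Δ :=
    Set.EqOn.trans (Set.EqOn.symm ((hΨ₁ p Δ hΔ _ (isHS_sinv hΔ hD')).2.2.1 _ (isHS_sinv hΔ hD)))
      ((hΨ₁ p Δ hΔ _ hs).2.1 _ (isHS_sinv hΔ hDD') hinv)
  exact (hΘ.isConj hΔ hDD').eqOn
    (((hΘ.isConj hΔ hD).comp hΔ (hΘ.isConj hΔ hD')).congr hΔ hP hQ)

theorem IsConjSystem.exists_inv (hΨ₁ : IsPreHSMod k A E Ψ₁) (hΨ₂ : IsPreHSMod k A F Ψ₂)
    (hΘ : IsConjSystem Ψ₁ Ψ₂ Θ) (hΔ : IsCoideal Δ) (hD : IsHS k A Δ D) :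
    ∃ Θ' : MIdx p → Module.End k (E →ₗ[A] F),
      Set.EqOn (sconv (Θ p Δ D) Θ') one' Δ ∧ Set.EqOn (sconv Θ' (Θ p Δ D)) one' Δ := by
  have hDs := isHS_sinv hΔ hD
  have hDss := isHS_sinv hΔ hDs
  have h₁ : Set.EqOn (sconv D (sinv D)) one' Δ := fun α _ => congrFun (sconv_sinv hD.1) α
  have h₂ : Set.EqOn (sconv (sinv D) D) one' Δ := fun α _ => congrFun (sinv_sconv hD.1) α
  have h₃ : Set.EqOn (sconv (sinv D) (sinv (sinv D))) one' Δ :=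
    fun α _ => congrFun (sconv_sinv (sinv_zero D)) α
  have h₄ : Set.EqOn (sconv (sinv (sinv D)) (sinv D)) one' Δ :=
    fun α _ => congrFun (sinv_sconv (sinv_zero D)) α
  exact ⟨Θ p Δ (sinv D),
    (hΘ.isConj hΔ hD).sconv_eqOn_one' hΔ (hΘ.isConj hΔ hDs)
      (hΨ₂.sconv_eqOn_one' hΔ hD hDs h₁) (hΨ₁.sconv_eqOn_one' hΔ hDss hDs h₄),
    (hΘ.isConj hΔ hDs).sconv_eqOn_one' hΔ (hΘ.isConj hΔ hD)
      (hΨ₂.sconv_eqOn_one' hΔ hDs hD h₂) (hΨ₁.sconv_eqOn_one' hΔ hDs hDss h₃)⟩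

theorem IsConjSystem.map_bulletEnd (hΨ₁ : IsPreHSMod k A E Ψ₁) (hΘ : IsConjSystem Ψ₁ Ψ₂ Θ)
    (hΔ : IsCoideal Δ) (hD : IsHS k A Δ D) {q : ℕ} {nab : Set (MIdx q)} (hnab : IsCoideal nab)
    (φ : SubstMap A p q Δ nab)
    (hφ₁ : ∀ e ∈ nab, ∀ z : E, Ψ₁ q nab (φ.bulletEnd D) e z
      = ∑ α ∈ Iic (fun _ => wt e : MIdx p), φ.C α e • Ψ₁ p Δ D α z)
    (hφ₂ : ∀ e ∈ nab, ∀ y : F, Ψ₂ q nab (φ.bulletEnd D) e y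
      = ∑ α ∈ Iic (fun _ => wt e : MIdx p), φ.C α e • Ψ₂ p Δ D α y) :
    ∀ e ∈ nab, ∀ x : E →ₗ[A] F, Θ q nab (φ.bulletEnd D) e x
      = ∑ α ∈ Iic (fun _ => wt e : MIdx p), φ.C α e • Θ p Δ D α x := by
  intro e he x
  have hD' := isHS_bulletEnd φ hΔ hnab hD
  have hΘQ : ∀ z, Set.EqOn (happly (fun α => Θ p Δ D α x) fun γ => Ψ₁ p Δ D γ z)
      (fun α => Ψ₂ p Δ D α (x z)) Δ :=
    (hΘ.isConj hΔ hD).happly_eqOn hΔ (hΨ₁.sconv_eqOn_one' hΔ (isHS_sinv hΔ hD) hD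
      fun α _ => congrFun (sinv_sconv hD.1) α) x
  have hΞQ : ∀ z, Set.EqOn (happly (φ.bulletM fun α => Θ p Δ D α x)
      fun γ => Ψ₁ q nab (φ.bulletEnd D) γ z) (fun e => Ψ₂ q nab (φ.bulletEnd D) e (x z)) nab :=
    fun z e he => by
      have key := φ.bulletM_conv hΔ hnab (LinearMap.id : (E →ₗ[A] F) →ₗ[A] E →ₗ[A] F)
        (fun α => Θ p Δ D α x) (fun γ => Ψ₁ p Δ D γ z) he
      simp only [LinearMap.id_apply, ← happly_eq_conv] at key
      have hφz : Set.EqOn (fun γ => Ψ₁ q nab (φ.bulletEnd D) γ z)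
          (φ.bulletM fun α => Ψ₁ p Δ D α z) nab := fun γ hγ => hφ₁ γ hγ z
      rw [eqOn_happly hnab (Set.eqOn_refl _ nab) hφz he, ← key, φ.bulletM_congr (hΘQ z)]
      exact (hφ₂ e he (x z)).symm
  have hQ : Set.EqOn (sconv (Ψ₁ q nab (φ.bulletEnd D)) (Ψ₁ q nab (sinv (φ.bulletEnd D)))) one'
      nab :=
    hΨ₁.sconv_eqOn_one' hnab hD' (isHS_sinv hnab hD') fun α _ => congrFun (sconv_sinv hD'.1) α
  ext z
  exact ((hΘ.isConj hnab hD') x z he).trans (eqOn_fapply_of_happly_eqOn hnab hQ hΞQ z he).symm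

theorem IsConjSystem.isPreHSMod (hΘ : IsConjSystem Ψ₁ Ψ₂ Θ) (hΨ₁ : IsPreHSMod k A E Ψ₁)
    (hΨ₂ : IsPreHSMod k A F Ψ₂) : IsPreHSMod k A (E →ₗ[A] F) Θ := fun p Δ hΔ D hD =>
  ⟨hΘ.zero_eq_one hΨ₁ hΨ₂ hΔ hD, fun _ hD' => hΘ.eqOn_of_eqOn hΨ₁ hΨ₂ hΔ hD hD',
    fun _ hD' => hΘ.map_sconv hΨ₁ hΨ₂ hΔ hD hD', hΘ.exists_inv hΨ₁ hΨ₂ hΔ hD,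
    (isLeibniz_iff hΔ).1 (hΘ.isLeibniz hΨ₂ hΔ hD), fun q nab hnab φ hφ =>
      hΘ.map_bulletEnd hΨ₁ hΔ hD hnab φ ((hΨ₁ p Δ hΔ D hD).2.2.2.2.2 q nab hnab φ hφ)
        ((hΨ₂ p Δ hΔ D hD).2.2.2.2.2 q nab hnab φ hφ)⟩

theorem IsConjSystem.isHSMod (hΘ : IsConjSystem Ψ₁ Ψ₂ Θ) (hΨ₁ : IsPreHSMod k A E Ψ₁)
    (hΨ₂ : IsPreHSMod k A F Ψ₂) (hH₁ : IsHSMod k A E Ψ₁) (hH₂ : IsHSMod k A F Ψ₂) :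
    IsHSMod k A (E →ₗ[A] F) Θ := fun p Δ hΔ D hD =>
  ⟨hΘ.zero_eq_one hΨ₁ hΨ₂ hΔ hD, fun _ hD' => hΘ.eqOn_of_eqOn hΨ₁ hΨ₂ hΔ hD hD',
    fun _ hD' => hΘ.map_sconv hΨ₁ hΨ₂ hΔ hD hD', hΘ.exists_inv hΨ₁ hΨ₂ hΔ hD,
    (isLeibniz_iff hΔ).1 (hΘ.isLeibniz hΨ₂ hΔ hD), fun q nab hnab φ =>
      hΘ.map_bulletEnd hΨ₁ hΔ hD hnab φ ((hH₁ p Δ hΔ D hD).2.2.2.2.2 q nab hnab φ)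
        ((hH₂ p Δ hΔ D hD).2.2.2.2.2 q nab hnab φ)⟩

end HomSystem

/-- Let `(E,Ψ₁)` and `(F,Ψ₂)` be left pre-HS-modules over `A/k`.
(1) For every `p`, every non-empty co-ideal `Δ ⊆ ℕ^p` and every `D ∈ HS^p_k(A;Δ)`
(with inverse `D*`), there is a unique `k[[s]]_Δ`-linear automorphism `Θ` of
`Hom_A(E,F)[[s]]_Δ`, congruent to the identity, such that
`ν(Θ(h)) = Ψ₂^p_Δ(D) ∘ ν(h) ∘ Ψ₁^p_Δ(D*)` for every `h`.  (2) The resulting system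
is a left pre-HS-module structure on `Hom_A(E,F)`, and a HS-module structure
whenever `Ψ₁` and `Ψ₂` are. -/
theorem stmt15 (k A E F : Type*) [CommRing k] [CommRing A] [Algebra k A]
    [AddCommGroup E] [Module k E] [Module A E] [IsScalarTower k A E]
    [AddCommGroup F] [Module k F] [Module A F] [IsScalarTower k A F]
    (Ψ₁ : HSSystem k A E) (Ψ₂ : HSSystem k A F)
    (hΨ₁ : IsPreHSMod k A E Ψ₁) (hΨ₂ : IsPreHSMod k A F Ψ₂) :
    -- (1)
    (∀ (p : ℕ) (Δ : Set (MIdx p)), IsCoideal Δ →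
      ∀ D Ds : MIdx p → Module.End k A, IsHS k A Δ D → IsHS k A Δ Ds →
        (∀ α ∈ Δ, sconv D Ds α = (one' : MIdx p → Module.End k A) α) →
        (∀ α ∈ Δ, sconv Ds D α = (one' : MIdx p → Module.End k A) α) →
        ∃ Θ : MIdx p → Module.End k (E →ₗ[A] F),
          Θ 0 = 1
          ∧ (∀ (hS : MIdx p → (E →ₗ[A] F)) (eS : MIdx p → E), ∀ α ∈ Δ,
              happly (fapply Θ hS) eS α
                = fapply (Ψ₂ p Δ D) (happly hS (fapply (Ψ₁ p Δ Ds) eS)) α)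
          ∧ (∃ Θ' : MIdx p → Module.End k (E →ₗ[A] F),
              (∀ α ∈ Δ, sconv Θ Θ' α = (one' : MIdx p → Module.End k (E →ₗ[A] F)) α)
              ∧ (∀ α ∈ Δ, sconv Θ' Θ α = (one' : MIdx p → Module.End k (E →ₗ[A] F)) α))
          ∧ (∀ Θ'' : MIdx p → Module.End k (E →ₗ[A] F),
              (∀ (hS : MIdx p → (E →ₗ[A] F)) (eS : MIdx p → E), ∀ α ∈ Δ,
                happly (fapply Θ'' hS) eS α
                  = fapply (Ψ₂ p Δ D) (happly hS (fapply (Ψ₁ p Δ Ds) eS)) α) →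
              ∀ α ∈ Δ, Θ'' α = Θ α))
    -- (2) pre-HS-module structure
    ∧ (∀ Θsys : HSSystem k A (E →ₗ[A] F),
        (∀ (p : ℕ) (Δ : Set (MIdx p)), IsCoideal Δ →
          ∀ D Ds : MIdx p → Module.End k A, IsHS k A Δ D → IsHS k A Δ Ds →
            (∀ α ∈ Δ, sconv D Ds α = (one' : MIdx p → Module.End k A) α) →
            (∀ α ∈ Δ, sconv Ds D α = (one' : MIdx p → Module.End k A) α) →
            ∀ (hS : MIdx p → (E →ₗ[A] F)) (eS : MIdx p → E), ∀ α ∈ Δ,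
              happly (fapply (Θsys p Δ D) hS) eS α
                = fapply (Ψ₂ p Δ D) (happly hS (fapply (Ψ₁ p Δ Ds) eS)) α) →
        IsPreHSMod k A (E →ₗ[A] F) Θsys)
    -- (2') HS-module structure when `Ψ₁` and `Ψ₂` are HS-module structures
    ∧ (IsHSMod k A E Ψ₁ → IsHSMod k A F Ψ₂ →
        ∀ Θsys : HSSystem k A (E →ₗ[A] F),
        (∀ (p : ℕ) (Δ : Set (MIdx p)), IsCoideal Δ →
          ∀ D Ds : MIdx p → Module.End k A, IsHS k A Δ D → IsHS k A Δ Ds →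
            (∀ α ∈ Δ, sconv D Ds α = (one' : MIdx p → Module.End k A) α) →
            (∀ α ∈ Δ, sconv Ds D α = (one' : MIdx p → Module.End k A) α) →
            ∀ (hS : MIdx p → (E →ₗ[A] F)) (eS : MIdx p → E), ∀ α ∈ Δ,
              happly (fapply (Θsys p Δ D) hS) eS α
                = fapply (Ψ₂ p Δ D) (happly hS (fapply (Ψ₁ p Δ Ds) eS)) α) →
        IsHSMod k A (E →ₗ[A] F) Θsys) := by
  refine ⟨fun p Δ hΔ D Ds hD hDs h₁ h₂ => ?_,
    fun Θsys hΘ => IsConjSystem.isPreHSMod hΘ hΨ₁ hΨ₂,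
    fun hH₁ hH₂ Θsys hΘ => IsConjSystem.isHSMod hΘ hΨ₁ hΨ₂ hH₁ hH₂⟩
  obtain ⟨Θ, hΘ⟩ := exists_isConj hΔ (hΨ₂.isLeibniz hΔ hD) (hΨ₁.isLeibniz hΔ hDs) h₁
  obtain ⟨Θ', hΘ'⟩ := exists_isConj hΔ (hΨ₂.isLeibniz hΔ hDs) (hΨ₁.isLeibniz hΔ hD) h₂
  refine ⟨Θ, hΘ.zero_eq_one hΔ (hΨ₂ p Δ hΔ D hD).1 (hΨ₁ p Δ hΔ Ds hDs).1, (isConj_iff hΔ).1 hΘ,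
    ⟨Θ', ?_, ?_⟩, fun Θ'' h'' => ((isConj_iff hΔ).2 h'').eqOn hΘ⟩
  · exact hΘ.sconv_eqOn_one' hΔ hΘ' (hΨ₂.sconv_eqOn_one' hΔ hD hDs h₁)
      (hΨ₁.sconv_eqOn_one' hΔ hD hDs h₁)
  · exact hΘ'.sconv_eqOn_one' hΔ hΘ (hΨ₂.sconv_eqOn_one' hΔ hDs hD h₂)
      (hΨ₁.sconv_eqOn_one' hΔ hDs hD h₂)

end HS
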